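/- arXiv:2005.02490 — 8 statements merged into one kernel-verified Lean document; each statement's English description precedes it below -/
import Mathlib

section
/- Let Φ : ℝ → ℝ satisfy Condition L with constant 𝒦 > 0. Then for all u, v ∈ ℝ, |1 − √(Φ(v)/Φ(u))| ≤ (𝒦/2) |v − u| exp(𝒦 |v − u| / 2). -/
/-- `|exp t - 1| ≤ |t| * exp |t|`. -/
lemma abs_exp_sub_one_le (t : ℝ) : |Real.exp t - 1| ≤ |t| * Real.exp |t| := by
  rcases le_or_gt 0 t with ht | ht
  · rw [abs_of_nonneg (by linarith [Real.one_le_exp ht]), abs_of_nonneg ht]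
    have h := Real.add_one_le_exp (-t)
    have hx : 1 - t ≤ Real.exp (-t) := by linarith
    have := mul_le_mul_of_nonneg_left hx (Real.exp_nonneg t)
    rw [← Real.exp_add] at this
    simp at this
    nlinarith [Real.exp_pos t]
  · have h1 : 1 ≤ Real.exp (-t) := Real.one_le_exp (by linarith)
    have h2 : Real.exp t * Real.exp (-t) = 1 := by rw [← Real.exp_add]; simp
    have h3 : Real.exp t ≤ 1 := by nlinarith [Real.exp_pos t, Real.exp_pos (-t)]
    rw [abs_of_nonpos (by linarith), abs_of_neg ht]
    have h := Real.add_one_le_exp t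
    nlinarith [Real.exp_pos t]

/-- **Square-root ratio bound under Condition L.**
If `Φ` satisfies Condition L with constant `𝒦 > 0`, then for all `u, v`,
`|1 - √(Φ(v)/Φ(u))| ≤ (𝒦/2) |v - u| exp(𝒦 |v - u| / 2)`. -/
theorem stmt6 (Φ φ : ℝ → ℝ) (𝒦 : ℝ) (h𝒦 : 0 < 𝒦)
    (hderiv : ∀ x, HasDerivAt Φ (φ x) x)
    (hmono : StrictMono Φ)
    (h01 : ∀ x, 0 < Φ x ∧ Φ x < 1)
    (hratio : ∀ x, φ x / Φ x ≤ 𝒦)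
    (u v : ℝ) :
    |1 - Real.sqrt (Φ v / Φ u)| ≤ 𝒦 / 2 * |v - u| * Real.exp (𝒦 * |v - u| / 2) := by
  set g : ℝ → ℝ := fun x => Real.log (Φ x) with hg
  have hgderiv : ∀ x, HasDerivAt g (φ x / Φ x) x := fun x =>
    (hderiv x).log (h01 x).1.ne'
  have hphi_nonneg : ∀ x, 0 ≤ φ x := by
    intro x
    have h1 : Filter.Tendsto (slope Φ x) (nhdsWithin x (Set.Ioi x)) (nhds (φ x)) :=
      (hasDerivAt_iff_tendsto_slope.1 (hderiv x)).mono_left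
        (nhdsWithin_mono x fun y hy => ne_of_gt hy)
    refine ge_of_tendsto h1 ?_
    filter_upwards [self_mem_nhdsWithin] with y hy
    rw [slope_def_field]
    have hxy : x < y := hy
    exact div_nonneg (by linarith [hmono.monotone hxy.le]) (by linarith)
  have hglip : |g v - g u| ≤ 𝒦 * |v - u| := by
    have := Convex.norm_image_sub_le_of_norm_hasDerivWithin_le
      (f := g) (f' := fun x => φ x / Φ x) (C := 𝒦) (s := Set.univ)
      (fun x _ => (hgderiv x).hasDerivWithinAt)
      (fun x _ => by
        rw [Real.norm_eq_abs, abs_of_nonneg (div_nonneg (hphi_nonneg x) (h01 x).1.le)]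
        exact hratio x)
      convex_univ (Set.mem_univ u) (Set.mem_univ v)
    simpa [Real.norm_eq_abs, abs_sub_comm] using this
  have hsqrt : Real.sqrt (Φ v / Φ u) = Real.exp ((g v - g u) / 2) := by
    rw [Real.sqrt_eq_rpow, Real.rpow_def_of_pos (div_pos (h01 v).1 (h01 u).1),
      Real.log_div (h01 v).1.ne' (h01 u).1.ne']
    congr 1
    ring
  rw [hsqrt, abs_sub_comm]
  set t := (g v - g u) / 2 with ht
  have habs : |t| ≤ 𝒦 * |v - u| / 2 := by
    rw [ht, abs_div, abs_two]
    linarith [hglip]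
  calc |Real.exp t - 1| ≤ |t| * Real.exp |t| := abs_exp_sub_one_le t
    _ ≤ (𝒦 * |v - u| / 2) * Real.exp (𝒦 * |v - u| / 2) := by
        apply mul_le_mul habs (Real.exp_le_exp.2 habs) (Real.exp_nonneg _)
        positivity
    _ = 𝒦 / 2 * |v - u| * Real.exp (𝒦 * |v - u| / 2) := by ring
end

section
/- Let Φ satisfy Condition L with constant 𝒦 > 0, let h be a probability density on [0,1], let F_X be a probability measure on [0,1]^P, and let u, v : [0,1] × [0,1]^P → ℝ be bounded measurable functions. Then the F_X-integrated squared Hellinger distance between the tilted conditional densities satisfies H²(f_u, f_v) ≤ 𝒦² ‖u − v‖_∞² exp(𝒦 ‖u − v‖_∞). In fact the stronger pointwise-in-x bound holds: for every x, ∫₀¹ (√(f_u(y∣x)) − √(f_v(y∣x)))² dy ≤ 𝒦² ‖u − v‖_∞² exp(𝒦 ‖u − v‖_∞). -/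
/-!
Condition L makes `log Φ - 𝒦 t` antitone, so `|u - v| ≤ M` gives `Φ u ≤ c Φ v` and
`Φ v ≤ c Φ u` with `c = exp (𝒦 M)`. For unnormalised densities `p, q` with masses `P, Q` and
ratio in `[1/c, c]`, the squared Hellinger distance of `p / P` and `q / Q` equals
`(∫ (√p - √q)² - (√P - √Q)²) / √(PQ)`, which is at most
`(√c - 1)² min P Q / √(PQ) ≤ (√c - 1)²`; finally `(exp (d/2) - 1)² ≤ d² exp d` for `d ≥ 0`.
-/

open MeasureTheory Real

section LogDerivBound

variable {Φ φ : ℝ → ℝ} {𝒦 : ℝ}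

lemma antitone_log_sub_mul_of_deriv_div_le (hderiv : ∀ t, HasDerivAt Φ (φ t) t)
    (hpos : ∀ t, 0 < Φ t) (hratio : ∀ t, φ t / Φ t ≤ 𝒦) :
    Antitone fun t => log (Φ t) - 𝒦 * t := by
  have hd : ∀ t, HasDerivAt (fun t => log (Φ t) - 𝒦 * t) (φ t / Φ t - 𝒦) t := fun t =>
    ((hderiv t).log (hpos t).ne').sub (by simpa using (hasDerivAt_id t).const_mul 𝒦)
  exact antitone_of_deriv_nonpos (fun t => (hd t).differentiableAt)
    fun t => (hd t).deriv ▸ sub_nonpos.2 (hratio t)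

lemma le_exp_mul_mul_of_abs_sub_le (hderiv : ∀ t, HasDerivAt Φ (φ t) t) (hmono : Monotone Φ)
    (hpos : ∀ t, 0 < Φ t) (hratio : ∀ t, φ t / Φ t ≤ 𝒦) (h𝒦 : 0 ≤ 𝒦) {a b M : ℝ}
    (hab : |a - b| ≤ M) : Φ a ≤ exp (𝒦 * M) * Φ b := by
  rcases le_total a b with hle | hle
  · calc Φ a ≤ Φ b := hmono hle
      _ ≤ exp (𝒦 * M) * Φ b :=
        le_mul_of_one_le_left (hpos b).le
          (one_le_exp (mul_nonneg h𝒦 ((abs_nonneg _).trans hab)))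
  · have hanti := antitone_log_sub_mul_of_deriv_div_le hderiv hpos hratio hle
    have hlog : log (Φ a) ≤ log (Φ b) + 𝒦 * M := by
      linarith [mul_le_mul_of_nonneg_left (abs_le.1 hab).2 h𝒦]
    calc Φ a = exp (log (Φ a)) := (exp_log (hpos a)).symm
      _ ≤ exp (log (Φ b) + 𝒦 * M) := exp_le_exp.2 hlog
      _ = exp (𝒦 * M) * Φ b := by rw [exp_add, exp_log (hpos b), mul_comm]

end LogDerivBound

lemma sq_sub_le_sq_mul_sq {a b s : ℝ} (hb : 0 ≤ b) (hs : 1 ≤ s) (hab : a ≤ s * b)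
    (hba : b ≤ s * a) : (a - b) ^ 2 ≤ (s - 1) ^ 2 * b ^ 2 := by
  have ha : 0 ≤ a := by nlinarith
  rw [← mul_pow]
  apply sq_le_sq' <;> nlinarith

lemma sqrt_exp_sub_one_sq_le {d : ℝ} (hd : 0 ≤ d) :
    (√(exp d) - 1) ^ 2 ≤ d ^ 2 * exp d := by
  have hsub : exp (d / 2) - 1 ≤ exp (d / 2) * (d / 2) := by
    simpa using self_sub_one_le_mul_log (exp_pos (d / 2)).le
  have hexp : exp (d / 2) ^ 2 = exp d := by rw [← exp_nat_mul]; ring_nf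
  rw [← exp_half, ← hexp]
  nlinarith [one_le_exp (by linarith : 0 ≤ d / 2)]

section Hellinger

variable {α : Type*} [MeasurableSpace α] {μ : Measure α} {p q : α → ℝ}

lemma integrable_sqrt_sub_sqrt_sq (hp : Integrable p μ) (hq : Integrable q μ)
    (hp0 : ∀ y, 0 ≤ p y) (hq0 : ∀ y, 0 ≤ q y) :
    Integrable (fun y => (√(p y) - √(q y)) ^ 2) μ := by
  refine (hp.add hq).mono'
    (((continuous_sqrt.comp_aestronglyMeasurable hp.1).sub
      (continuous_sqrt.comp_aestronglyMeasurable hq.1)).pow 2) (.of_forall fun y => ?_)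
  rw [norm_of_nonneg (sq_nonneg _), Pi.add_apply]
  nlinarith [mul_nonneg (sqrt_nonneg (p y)) (sqrt_nonneg (q y)), sq_sqrt (hp0 y), sq_sqrt (hq0 y)]

lemma integral_sqrt_sub_sqrt_sq_le (hp : Integrable p μ) (hq : Integrable q μ)
    (hp0 : ∀ y, 0 ≤ p y) (hq0 : ∀ y, 0 ≤ q y) {c : ℝ} (hc : 1 ≤ c)
    (hpq : ∀ᵐ y ∂μ, p y ≤ c * q y) (hqp : ∀ᵐ y ∂μ, q y ≤ c * p y) :
    ∫ y, (√(p y) - √(q y)) ^ 2 ∂μ ≤ (√c - 1) ^ 2 * ∫ y, q y ∂μ := by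
  rw [← integral_const_mul]
  refine integral_mono_ae (integrable_sqrt_sub_sqrt_sq hp hq hp0 hq0) (hq.const_mul _) ?_
  filter_upwards [hpq, hqp] with y hpqy hqpy
  have hsqrt : ∀ {a b : ℝ}, a ≤ c * b → √a ≤ √c * √b := fun h =>
    (sqrt_le_sqrt h).trans_eq (sqrt_mul (by linarith) _)
  simpa only [sq_sqrt (hq0 y)] using
    sq_sub_le_sq_mul_sq (sqrt_nonneg _) (one_le_sqrt.2 hc) (hsqrt hpqy) (hsqrt hqpy)

lemma integral_sqrt_div_sub_sqrt_div_sq (hp : Integrable p μ) (hq : Integrable q μ)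
    (hp0 : ∀ y, 0 ≤ p y) (hq0 : ∀ y, 0 ≤ q y)
    (hP : 0 < ∫ y, p y ∂μ) (hQ : 0 < ∫ y, q y ∂μ) :
    ∫ y, (√(p y / ∫ t, p t ∂μ) - √(q y / ∫ t, q t ∂μ)) ^ 2 ∂μ
      = (∫ y, (√(p y) - √(q y)) ^ 2 ∂μ - (√(∫ t, p t ∂μ) - √(∫ t, q t ∂μ)) ^ 2)
        / (√(∫ t, p t ∂μ) * √(∫ t, q t ∂μ)) := by
  set P := ∫ t, p t ∂μ with hPdef
  set Q := ∫ t, q t ∂μ with hQdef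
  have hexpand : ∀ a b sP sQ : ℝ, sP ≠ 0 → sQ ≠ 0 → (a / sP - b / sQ) ^ 2
      = (1 / sP ^ 2 - 1 / (sP * sQ)) * a ^ 2 + (1 / sQ ^ 2 - 1 / (sP * sQ)) * b ^ 2
        + (a - b) ^ 2 / (sP * sQ) := by
    intro a b sP sQ hsP hsQ
    field_simp
    ring
  have hpointwise : ∀ y, (√(p y / P) - √(q y / Q)) ^ 2
      = (1 / P - 1 / (√P * √Q)) * p y + (1 / Q - 1 / (√P * √Q)) * q y
        + (√(p y) - √(q y)) ^ 2 / (√P * √Q) := by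
    intro y
    rw [sqrt_div (hp0 y), sqrt_div (hq0 y), hexpand _ _ _ _ (sqrt_pos.2 hP).ne' (sqrt_pos.2 hQ).ne',
      sq_sqrt (hp0 y), sq_sqrt (hq0 y), sq_sqrt hP.le, sq_sqrt hQ.le]
  simp_rw [hpointwise]
  rw [integral_add, integral_add, integral_const_mul, integral_const_mul, integral_div]
  · field_simp
    rw [← hPdef, ← hQdef]
    linear_combination (P * Q) * sq_sqrt hP.le + (P * Q) * sq_sqrt hQ.le
  · exact hp.const_mul _
  · exact hq.const_mul _
  · exact (hp.const_mul _).add (hq.const_mul _)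
  · exact (integrable_sqrt_sub_sqrt_sq hp hq hp0 hq0).div_const _

theorem integral_sqrt_div_sub_sqrt_div_sq_le (hp : Integrable p μ) (hq : Integrable q μ)
    (hp0 : ∀ y, 0 ≤ p y) (hq0 : ∀ y, 0 ≤ q y) {c : ℝ} (hc : 1 ≤ c)
    (hpq : ∀ᵐ y ∂μ, p y ≤ c * q y) (hqp : ∀ᵐ y ∂μ, q y ≤ c * p y)
    (hP : 0 < ∫ y, p y ∂μ) (hQ : 0 < ∫ y, q y ∂μ) :
    ∫ y, (√(p y / ∫ t, p t ∂μ) - √(q y / ∫ t, q t ∂μ)) ^ 2 ∂μ ≤ (√c - 1) ^ 2 := by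
  rw [integral_sqrt_div_sub_sqrt_div_sq hp hq hp0 hq0 hP hQ, div_le_iff₀ (by positivity)]
  have hJq := integral_sqrt_sub_sqrt_sq_le hp hq hp0 hq0 hc hpq hqp
  have hJp := integral_sqrt_sub_sqrt_sq_le hq hp hq0 hp0 hc hqp hpq
  simp_rw [sub_sq_comm (√(q _))] at hJp
  rw [← sq_sqrt hP.le] at hJp
  rw [← sq_sqrt hQ.le] at hJq
  set sP := √(∫ t, p t ∂μ)
  set sQ := √(∫ t, q t ∂μ)
  have hK : 0 ≤ (√c - 1) ^ 2 := sq_nonneg _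
  have hJ : ∫ y, (√(p y) - √(q y)) ^ 2 ∂μ ≤ (√c - 1) ^ 2 * (sP * sQ) := by
    rcases le_total sP sQ with hle | hle
    · refine hJp.trans (mul_le_mul_of_nonneg_left ?_ hK)
      nlinarith [sqrt_nonneg (∫ t, p t ∂μ)]
    · refine hJq.trans (mul_le_mul_of_nonneg_left ?_ hK)
      nlinarith [sqrt_nonneg (∫ t, q t ∂μ)]
  nlinarith [sq_nonneg (sP - sQ)]

end Hellinger

lemma setIntegral_le_of_forall_le {X : Type*} [MeasurableSpace X] {μ : Measure X}
    [IsProbabilityMeasure μ] {s : Set X} {f : X → ℝ} {C : ℝ} (hC : 0 ≤ C)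
    (hf0 : ∀ x ∈ s, 0 ≤ f x) (hfC : ∀ x ∈ s, f x ≤ C) : ∫ x in s, f x ∂μ ≤ C :=
  calc ∫ x in s, f x ∂μ ≤ ‖∫ x in s, f x ∂μ‖ := le_norm_self _
    _ ≤ C * μ.real s := norm_setIntegral_le_of_norm_le_const (measure_lt_top _ _)
        fun x hx => (norm_of_nonneg (hf0 x hx)).trans_le (hfC x hx)
    _ ≤ C := mul_le_of_le_one_right hC measureReal_le_one

section Tilt

variable {α : Type*} [MeasurableSpace α] {μ : Measure α} {Φ φ : ℝ → ℝ} {𝒦 : ℝ} {h : α → ℝ}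

lemma integral_mul_pos_of_integral_pos {g : α → ℝ} (hh : Integrable h μ)
    (hh0 : ∀ y, 0 ≤ h y) (hpos : 0 < ∫ y, h y ∂μ) (hg0 : ∀ y, 0 < g y)
    (hhg : Integrable (fun y => h y * g y) μ) : 0 < ∫ y, h y * g y ∂μ := by
  have hsupport : Function.support (fun y => h y * g y) = Function.support h := by
    ext y
    simp [(hg0 y).ne']
  rw [integral_pos_iff_support_of_nonneg hh0 hh] at hpos
  rwa [integral_pos_iff_support_of_nonneg (fun y => mul_nonneg (hh0 y) (hg0 y).le) hhg,
    hsupport]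

lemma integrable_mul_comp_and_integral_pos (hΦ : Continuous Φ) (hpos : ∀ t, 0 < Φ t)
    (hle : ∀ t, Φ t ≤ 1) (hh : Integrable h μ) (hh0 : ∀ y, 0 ≤ h y)
    (hhpos : 0 < ∫ y, h y ∂μ) {a : α → ℝ} (ha : AEStronglyMeasurable a μ) :
    Integrable (fun y => h y * Φ (a y)) μ ∧ 0 < ∫ y, h y * Φ (a y) ∂μ := by
  have hint : Integrable (fun y => h y * Φ (a y)) μ :=
    hh.mul_bdd (hΦ.comp_aestronglyMeasurable ha)
      (.of_forall fun y => (norm_of_nonneg (hpos _).le).trans_le (hle _))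
  exact ⟨hint, integral_mul_pos_of_integral_pos hh hh0 hhpos (fun y => hpos _) hint⟩

theorem integral_sqrt_tilt_sub_sqrt_tilt_sq_le (hderiv : ∀ t, HasDerivAt Φ (φ t) t)
    (hmono : Monotone Φ) (hpos : ∀ t, 0 < Φ t) (hle : ∀ t, Φ t ≤ 1)
    (hratio : ∀ t, φ t / Φ t ≤ 𝒦) (h𝒦 : 0 ≤ 𝒦) (hh : Integrable h μ) (hh0 : ∀ y, 0 ≤ h y)
    (hhpos : 0 < ∫ y, h y ∂μ) {a b : α → ℝ} (ha : AEStronglyMeasurable a μ)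
    (hb : AEStronglyMeasurable b μ) {M : ℝ} (hM0 : 0 ≤ M) (hab : ∀ᵐ y ∂μ, |a y - b y| ≤ M) :
    ∫ y, (√(h y * Φ (a y) / ∫ t, h t * Φ (a t) ∂μ)
        - √(h y * Φ (b y) / ∫ t, h t * Φ (b t) ∂μ)) ^ 2 ∂μ
      ≤ 𝒦 ^ 2 * M ^ 2 * exp (𝒦 * M) := by
  have hΦ : Continuous Φ := continuous_iff_continuousAt.2 fun t => (hderiv t).continuousAt
  obtain ⟨hpa, hPa⟩ := integrable_mul_comp_and_integral_pos hΦ hpos hle hh hh0 hhpos ha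
  obtain ⟨hpb, hPb⟩ := integrable_mul_comp_and_integral_pos hΦ hpos hle hh hh0 hhpos hb
  have htilt : ∀ {s t : ℝ}, |s - t| ≤ M → ∀ y, h y * Φ s ≤ exp (𝒦 * M) * (h y * Φ t) :=
    fun hst y => by
      rw [mul_left_comm]
      exact mul_le_mul_of_nonneg_left
        (le_exp_mul_mul_of_abs_sub_le hderiv hmono hpos hratio h𝒦 hst) (hh0 y)
  calc _ ≤ (√(exp (𝒦 * M)) - 1) ^ 2 :=
        integral_sqrt_div_sub_sqrt_div_sq_le hpa hpb
          (fun y => mul_nonneg (hh0 y) (hpos _).le) (fun y => mul_nonneg (hh0 y) (hpos _).le)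
          (one_le_exp (by positivity)) (hab.mono fun y hy => htilt hy y)
          (hab.mono fun y hy => htilt ((abs_sub_comm _ _).trans_le hy) y) hPa hPb
    _ ≤ (𝒦 * M) ^ 2 * exp (𝒦 * M) := sqrt_exp_sub_one_sq_le (by positivity)
    _ = 𝒦 ^ 2 * M ^ 2 * exp (𝒦 * M) := by ring

end Tilt

theorem stmt7_general (P : ℕ) (Φ φ : ℝ → ℝ) (𝒦 : ℝ) (h𝒦 : 0 < 𝒦)
    (hderiv : ∀ x, HasDerivAt Φ (φ x) x)
    (hmono : StrictMono Φ)
    (h01 : ∀ x, 0 < Φ x ∧ Φ x < 1)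
    (hratio : ∀ x, φ x / Φ x ≤ 𝒦)
    (h : ℝ → ℝ) (hh_nonneg : ∀ y, 0 ≤ h y)
    (hh_int : (∫ y in Set.Icc (0:ℝ) 1, h y) = 1)
    (F : Measure (Fin P → ℝ)) [IsProbabilityMeasure F]
    (u v : ℝ → (Fin P → ℝ) → ℝ)
    (hu_meas : Measurable (Function.uncurry u))
    (hv_meas : Measurable (Function.uncurry v))
    (M : ℝ)
    (hM : ∀ y ∈ Set.Icc (0:ℝ) 1, ∀ x ∈ Set.univ.pi fun _ : Fin P => Set.Icc (0:ℝ) 1,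
        |u y x - v y x| ≤ M)
    (f : (ℝ → (Fin P → ℝ) → ℝ) → ℝ → (Fin P → ℝ) → ℝ)
    (hf : f = fun w y x => h y * Φ (w y x) / ∫ t in Set.Icc (0:ℝ) 1, h t * Φ (w t x)) :
    (∫ x in Set.univ.pi fun _ : Fin P => Set.Icc (0:ℝ) 1,
        (∫ y in Set.Icc (0:ℝ) 1, (Real.sqrt (f u y x) - Real.sqrt (f v y x)) ^ 2) ∂F)
      ≤ 𝒦 ^ 2 * M ^ 2 * Real.exp (𝒦 * M) ∧
    ∀ x ∈ Set.univ.pi fun _ : Fin P => Set.Icc (0:ℝ) 1,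
      (∫ y in Set.Icc (0:ℝ) 1, (Real.sqrt (f u y x) - Real.sqrt (f v y x)) ^ 2)
        ≤ 𝒦 ^ 2 * M ^ 2 * Real.exp (𝒦 * M) := by
  subst hf
  have hM0 : 0 ≤ M :=
    (abs_nonneg _).trans (hM 0 ⟨le_rfl, zero_le_one⟩ 0 fun _ _ => ⟨le_rfl, zero_le_one⟩)
  have hh : IntegrableOn h (Set.Icc 0 1) :=
    Integrable.of_integral_ne_zero (by rw [hh_int]; exact one_ne_zero)
  have hpointwise := fun x (hx : x ∈ Set.univ.pi fun _ : Fin P => Set.Icc (0:ℝ) 1) =>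
    integral_sqrt_tilt_sub_sqrt_tilt_sq_le hderiv hmono.monotone (fun t => (h01 t).1)
      (fun t => (h01 t).2.le) hratio h𝒦.le hh hh_nonneg (by rw [hh_int]; exact one_pos)
      (hu_meas.comp measurable_prodMk_right).aestronglyMeasurable
      (hv_meas.comp measurable_prodMk_right).aestronglyMeasurable hM0
      ((ae_restrict_mem measurableSet_Icc).mono fun y hy => hM y hy x hx)
  exact ⟨setIntegral_le_of_forall_le (by positivity)
    (fun _ _ => integral_nonneg fun _ => sq_nonneg _) hpointwise, hpointwise⟩

/-- **Hellinger distance bound for tilted conditional densities.**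
If `Φ` satisfies Condition L with constant `𝒦 > 0`, `h` is a density on `[0,1]`, `F_X` is a
probability measure on `[0,1]^P`, and `u, v` are bounded (by `M` ≥ `‖u - v‖_∞`) measurable
functions, then the `F_X`-integrated squared Hellinger distance between the tilted conditional
densities `f_u, f_v` is at most `𝒦² M² exp(𝒦 M)`; in fact the bound holds pointwise in `x`. -/
theorem stmt7 (P : ℕ) (Φ φ : ℝ → ℝ) (𝒦 : ℝ) (h𝒦 : 0 < 𝒦)
    (hderiv : ∀ x, HasDerivAt Φ (φ x) x)
    (hmono : StrictMono Φ)
    (h01 : ∀ x, 0 < Φ x ∧ Φ x < 1)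
    (hratio : ∀ x, φ x / Φ x ≤ 𝒦)
    (h : ℝ → ℝ) (hh_meas : Measurable h) (hh_nonneg : ∀ y, 0 ≤ h y)
    (hh_int : (∫ y in Set.Icc (0:ℝ) 1, h y) = 1)
    (F : Measure (Fin P → ℝ)) [IsProbabilityMeasure F]
    (u v : ℝ → (Fin P → ℝ) → ℝ)
    (hu_meas : Measurable (Function.uncurry u))
    (hv_meas : Measurable (Function.uncurry v))
    (M : ℝ)
    (hM : ∀ y ∈ Set.Icc (0:ℝ) 1, ∀ x ∈ Set.univ.pi fun _ : Fin P => Set.Icc (0:ℝ) 1,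
        |u y x - v y x| ≤ M)
    (f : (ℝ → (Fin P → ℝ) → ℝ) → ℝ → (Fin P → ℝ) → ℝ)
    (hf : f = fun w y x => h y * Φ (w y x) / ∫ t in Set.Icc (0:ℝ) 1, h t * Φ (w t x)) :
    (∫ x in Set.univ.pi fun _ : Fin P => Set.Icc (0:ℝ) 1,
        (∫ y in Set.Icc (0:ℝ) 1, (Real.sqrt (f u y x) - Real.sqrt (f v y x)) ^ 2) ∂F)
      ≤ 𝒦 ^ 2 * M ^ 2 * Real.exp (𝒦 * M) ∧
    ∀ x ∈ Set.univ.pi fun _ : Fin P => Set.Icc (0:ℝ) 1,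
      (∫ y in Set.Icc (0:ℝ) 1, (Real.sqrt (f u y x) - Real.sqrt (f v y x)) ^ 2)
        ≤ 𝒦 ^ 2 * M ^ 2 * Real.exp (𝒦 * M) :=
  stmt7_general P Φ φ 𝒦 h𝒦 hderiv hmono h01 hratio h hh_nonneg hh_int F u v hu_meas hv_meas M hM f
    hf
end

section
/- Let Φ satisfy Condition L with constant 𝒦 > 0, let h be a probability density on [0,1], and let u, v : [0,1] × [0,1]^P → ℝ be bounded measurable functions. Then for every y ∈ [0,1] and x ∈ [0,1]^P, f_u(y∣x) / f_v(y∣x) ≤ exp(2𝒦 ‖u − v‖_∞). In particular, log ‖f_u/f_v‖_∞ ≤ 2𝒦 ‖u − v‖_∞. -/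
/-!
Condition L says `(log Φ)' ≤ 𝒦`, so `Φ s · exp (-𝒦 s)` is antitone; together with the
monotonicity of `Φ` this gives `Φ a ≤ exp (𝒦 M) Φ b` whenever `a - b ≤ M`. Applied at `y`, this
bounds the ratio of the numerators of `f_u` and `f_v`, and applied under the integral, with the
roles of `u` and `v` exchanged, it bounds the ratio of the normalising constants; each
contributes a factor `exp (𝒦 M)`.
-/

open MeasureTheory Real

theorem antitone_mul_exp_neg_of_hasDerivAt_le {Φ φ : ℝ → ℝ} {K : ℝ}
    (hderiv : ∀ s, HasDerivAt Φ (φ s) s) (hle : ∀ s, φ s ≤ K * Φ s) :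
    Antitone fun s => Φ s * exp (-K * s) := by
  refine antitone_of_hasDerivAt_nonpos
    (f' := fun s => (φ s - K * Φ s) * exp (-K * s)) (fun s => ?_) fun s => ?_
  · exact ((hderiv s).mul ((hasDerivAt_id s).const_mul (-K)).exp).congr_deriv
      (by simp only [id]; ring)
  · exact mul_nonpos_of_nonpos_of_nonneg (by linarith [hle s]) (exp_pos _).le

theorem le_exp_mul_of_hasDerivAt_le {Φ φ : ℝ → ℝ} {K : ℝ}
    (hderiv : ∀ s, HasDerivAt Φ (φ s) s) (hle : ∀ s, φ s ≤ K * Φ s) {b c : ℝ} (hbc : b ≤ c) :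
    Φ c ≤ exp (K * (c - b)) * Φ b := by
  have h := antitone_mul_exp_neg_of_hasDerivAt_le hderiv hle hbc
  calc Φ c = Φ c * exp (-K * c) * exp (K * c) := by
        rw [mul_assoc, ← exp_add]; simp
    _ ≤ Φ b * exp (-K * b) * exp (K * c) := by gcongr
    _ = exp (K * (c - b)) * Φ b := by
        rw [mul_assoc, ← exp_add, mul_comm]; ring_nf

theorem le_exp_mul_of_sub_le {Φ φ : ℝ → ℝ} {K : ℝ} (hmono : Monotone Φ)
    (hderiv : ∀ s, HasDerivAt Φ (φ s) s) (hle : ∀ s, φ s ≤ K * Φ s)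
    {a b M : ℝ} (hM : 0 ≤ M) (hab : a - b ≤ M) :
    Φ a ≤ exp (K * M) * Φ b :=
  calc Φ a ≤ Φ (b + M) := hmono (by linarith)
    _ ≤ exp (K * (b + M - b)) * Φ b :=
        le_exp_mul_of_hasDerivAt_le hderiv hle (le_add_of_nonneg_right hM)
    _ = exp (K * M) * Φ b := by ring_nf

theorem mul_div_div_mul_div_le_mul {c A B I J K : ℝ} (hc : 0 ≤ c) (hB : 0 ≤ B)
    (hI : 0 ≤ I) (hJ : 0 ≤ J) (hK : 0 ≤ K) (hAB : A ≤ K * B) (hJI : J ≤ K * I) :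
    c * A / I / (c * B / J) ≤ K * K := by
  rcases hc.eq_or_lt with rfl | hc
  · simpa using mul_nonneg hK hK
  calc c * A / I / (c * B / J) = A / B * (J / I) := by
        rw [div_div_div_eq, div_mul_div_comm, show I * (c * B) = c * (B * I) by ring,
          mul_assoc c, mul_div_mul_left _ _ hc.ne']
    _ ≤ K * K := mul_le_mul (div_le_of_le_mul₀ hB hK hAB) (div_le_of_le_mul₀ hI hK hJI)
        (div_nonneg hJ hI) hK

theorem setIntegral_mul_le_const_mul {α : Type*} [MeasurableSpace α] {μ : Measure α}
    {s : Set α} {h a b : α → ℝ} {K : ℝ} (hs : MeasurableSet s)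
    (ha : IntegrableOn (fun t => h t * a t) s μ) (hb : IntegrableOn (fun t => h t * b t) s μ)
    (hh : ∀ t ∈ s, 0 ≤ h t) (hba : ∀ t ∈ s, b t ≤ K * a t) :
    ∫ t in s, h t * b t ∂μ ≤ K * ∫ t in s, h t * a t ∂μ := by
  rw [← integral_const_mul]
  refine setIntegral_mono_on hb (ha.const_mul K) hs fun t ht => ?_
  calc h t * b t ≤ h t * (K * a t) := mul_le_mul_of_nonneg_left (hba t ht) (hh t ht)
    _ = K * (h t * a t) := by ring

theorem log_le_of_le_exp {x y : ℝ} (hx : 0 ≤ x) (hy : 0 ≤ y) (hxy : x ≤ exp y) : log x ≤ y := by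
  rcases hx.eq_or_lt with rfl | hx
  · simpa using hy
  · exact (log_le_iff_le_exp hx).mpr hxy

theorem stmt8_general (P : ℕ) (Φ φ : ℝ → ℝ) (𝒦 : ℝ) (h𝒦 : 0 < 𝒦)
    (hderiv : ∀ x, HasDerivAt Φ (φ x) x)
    (hmono : StrictMono Φ)
    (h01 : ∀ x, 0 < Φ x ∧ Φ x < 1)
    (hratio : ∀ x, φ x / Φ x ≤ 𝒦)
    (h : ℝ → ℝ) (hh_nonneg : ∀ y, 0 ≤ h y)
    (hh_int : (∫ y in Set.Icc (0:ℝ) 1, h y) = 1)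
    (u v : ℝ → (Fin P → ℝ) → ℝ)
    (hu_meas : Measurable (Function.uncurry u))
    (hv_meas : Measurable (Function.uncurry v))
    (M : ℝ)
    (hM : ∀ y ∈ Set.Icc (0:ℝ) 1, ∀ x ∈ Set.univ.pi fun _ : Fin P => Set.Icc (0:ℝ) 1,
        |u y x - v y x| ≤ M)
    (f : (ℝ → (Fin P → ℝ) → ℝ) → ℝ → (Fin P → ℝ) → ℝ)
    (hf : f = fun w y x => h y * Φ (w y x) / ∫ t in Set.Icc (0:ℝ) 1, h t * Φ (w t x)) :
    ∀ y ∈ Set.Icc (0:ℝ) 1, ∀ x ∈ Set.univ.pi fun _ : Fin P => Set.Icc (0:ℝ) 1,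
      f u y x / f v y x ≤ Real.exp (2 * 𝒦 * M) ∧
      Real.log (f u y x / f v y x) ≤ 2 * 𝒦 * M := by
  subst hf
  dsimp only
  intro y hy x hx
  have hM0 : 0 ≤ M := (abs_nonneg _).trans (hM y hy x hx)
  have hle : ∀ s, φ s ≤ 𝒦 * Φ s := fun s => (div_le_iff₀ (h01 s).1).mp (hratio s)
  have hΦ : ∀ a b, |a - b| ≤ M → Φ a ≤ exp (𝒦 * M) * Φ b := fun _ _ hab =>
    le_exp_mul_of_sub_le hmono.monotone hderiv hle hM0 ((le_abs_self _).trans hab)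
  have hint : ∀ w : ℝ → (Fin P → ℝ) → ℝ, Measurable (Function.uncurry w) →
      IntegrableOn (fun t => h t * Φ (w t x)) (Set.Icc 0 1) := fun w hw =>
    (Integrable.of_integral_ne_zero (by rw [hh_int]; exact one_ne_zero)).mul_bdd
      (hmono.monotone.measurable.comp hw.of_uncurry_right).aestronglyMeasurable
      (ae_of_all _ fun t => by rw [norm_of_nonneg (h01 _).1.le]; exact (h01 _).2.le)
  have hZ : ∀ w : ℝ → (Fin P → ℝ) → ℝ, 0 ≤ ∫ t in Set.Icc (0:ℝ) 1, h t * Φ (w t x) := fun w =>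
    setIntegral_nonneg measurableSet_Icc fun t _ => mul_nonneg (hh_nonneg t) (h01 _).1.le
  have hnorm := setIntegral_mul_le_const_mul measurableSet_Icc (hint u hu_meas) (hint v hv_meas)
    (fun t _ => hh_nonneg t) fun t ht => hΦ _ _ ((abs_sub_comm _ _).trans_le (hM t ht x hx))
  have hbound := mul_div_div_mul_div_le_mul (hh_nonneg y) (h01 _).1.le (hZ u) (hZ v)
    (exp_pos _).le (hΦ _ _ (hM y hy x hx)) hnorm
  rw [← exp_add, ← two_mul, ← mul_assoc] at hbound
  have hf_nonneg : ∀ w : ℝ → (Fin P → ℝ) → ℝ,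
      0 ≤ h y * Φ (w y x) / ∫ t in Set.Icc (0:ℝ) 1, h t * Φ (w t x) := fun w =>
    div_nonneg (mul_nonneg (hh_nonneg y) (h01 _).1.le) (hZ w)
  exact ⟨hbound, log_le_of_le_exp (div_nonneg (hf_nonneg u) (hf_nonneg v)) (by positivity) hbound⟩

/-- **Ratio bound for tilted conditional densities.**
If `Φ` satisfies Condition L with constant `𝒦 > 0`, `h` is a density on `[0,1]`, and `u, v`
are bounded (by `M ≥ ‖u - v‖_∞`) measurable functions, then for every `y ∈ [0,1]` and
`x ∈ [0,1]^P`, `f_u(y∣x) / f_v(y∣x) ≤ exp(2𝒦 M)`; in particular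
`log (f_u(y∣x)/f_v(y∣x)) ≤ 2𝒦 M`. -/
theorem stmt8 (P : ℕ) (Φ φ : ℝ → ℝ) (𝒦 : ℝ) (h𝒦 : 0 < 𝒦)
    (hderiv : ∀ x, HasDerivAt Φ (φ x) x)
    (hmono : StrictMono Φ)
    (h01 : ∀ x, 0 < Φ x ∧ Φ x < 1)
    (hratio : ∀ x, φ x / Φ x ≤ 𝒦)
    (h : ℝ → ℝ) (hh_meas : Measurable h) (hh_nonneg : ∀ y, 0 ≤ h y)
    (hh_int : (∫ y in Set.Icc (0:ℝ) 1, h y) = 1)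
    (u v : ℝ → (Fin P → ℝ) → ℝ)
    (hu_meas : Measurable (Function.uncurry u))
    (hv_meas : Measurable (Function.uncurry v))
    (M : ℝ)
    (hM : ∀ y ∈ Set.Icc (0:ℝ) 1, ∀ x ∈ Set.univ.pi fun _ : Fin P => Set.Icc (0:ℝ) 1,
        |u y x - v y x| ≤ M)
    (f : (ℝ → (Fin P → ℝ) → ℝ) → ℝ → (Fin P → ℝ) → ℝ)
    (hf : f = fun w y x => h y * Φ (w y x) / ∫ t in Set.Icc (0:ℝ) 1, h t * Φ (w t x)) :
    ∀ y ∈ Set.Icc (0:ℝ) 1, ∀ x ∈ Set.univ.pi fun _ : Fin P => Set.Icc (0:ℝ) 1,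
      f u y x / f v y x ≤ Real.exp (2 * 𝒦 * M) ∧
      Real.log (f u y x / f v y x) ≤ 2 * 𝒦 * M :=
  stmt8_general P Φ φ 𝒦 h𝒦 hderiv hmono h01 hratio h hh_nonneg hh_int u v hu_meas hv_meas M hM f hf
end

section
/- For every 𝒦 > 0 there exists a constant C > 0 depending only on 𝒦 such that the following holds. Let Φ satisfy Condition L with constant 𝒦, let h be a probability density on [0,1], let F_X be a probability measure on [0,1]^P, and let u, v : [0,1] × [0,1]^P → ℝ be bounded measurable functions. Then the F_X-integrated second Kullback–Leibler variation satisfies V(f_u, f_v) ≤ C ‖u − v‖_∞² exp(𝒦 ‖u − v‖_∞) (1 + 2𝒦 ‖u − v‖_∞)². -/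
open MeasureTheory

lemma aux_phi_nonneg (Φ φ : ℝ → ℝ) (hd : ∀ x, HasDerivAt Φ (φ x) x)
    (hm : StrictMono Φ) (x : ℝ) : 0 ≤ φ x := by
  have h1 : Filter.Tendsto (slope Φ x) (nhdsWithin x (Set.Ioi x)) (nhds (φ x)) :=
    (hasDerivAt_iff_tendsto_slope.mp (hd x)).mono_left
      (nhdsWithin_mono x fun z hz => ne_of_gt hz)
  refine ge_of_tendsto h1 ?_
  filter_upwards [self_mem_nhdsWithin] with z hz
  have hz' : x < z := hz
  rw [slope_def_field]
  exact div_nonneg (sub_nonneg.mpr (hm.monotone hz'.le)) (sub_nonneg.mpr hz'.le)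

lemma aux_logPhi (𝒦 : ℝ) (Φ φ : ℝ → ℝ) (hd : ∀ x, HasDerivAt Φ (φ x) x)
    (hm : StrictMono Φ) (hpos : ∀ x, 0 < Φ x) (hk : ∀ x, φ x / Φ x ≤ 𝒦)
    (a b : ℝ) : |Real.log (Φ a) - Real.log (Φ b)| ≤ 𝒦 * |a - b| := by
  have key := Convex.norm_image_sub_le_of_norm_hasDerivWithin_le
    (f := fun t => Real.log (Φ t)) (f' := fun t => φ t / Φ t) (C := 𝒦) (s := Set.univ)
    (fun t _ => ((hd t).log (hpos t).ne').hasDerivWithinAt)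
    (fun t _ => by
      rw [Real.norm_eq_abs,
        abs_of_nonneg (div_nonneg (aux_phi_nonneg Φ φ hd hm t) (hpos t).le)]
      exact hk t)
    convex_univ (Set.mem_univ b) (Set.mem_univ a)
  simpa [Real.norm_eq_abs] using key

/-- **Kullback–Leibler bound for tilted conditional densities.**
For every `𝒦 > 0` there is a constant `C > 0` depending only on `𝒦` such that for any `Φ`
satisfying Condition L with constant `𝒦`, any density `h` on `[0,1]`, any probability measure
`F_X` on `[0,1]^P`, and bounded (by `M ≥ ‖u - v‖_∞`) measurable `u, v`, the `F_X`-integrated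
second Kullback–Leibler variation satisfies `V(f_u, f_v) ≤ C M² exp(𝒦 M) (1 + 2𝒦 M)²`. -/
theorem stmt10 (𝒦 : ℝ) (h𝒦 : 0 < 𝒦) :
    ∃ C : ℝ, 0 < C ∧
      ∀ (P : ℕ) (Φ φ : ℝ → ℝ),
        (∀ x, HasDerivAt Φ (φ x) x) → StrictMono Φ →
        (∀ x, 0 < Φ x ∧ Φ x < 1) → (∀ x, φ x / Φ x ≤ 𝒦) →
      ∀ (h : ℝ → ℝ), Measurable h → (∀ y, 0 ≤ h y) →
        (∫ y in Set.Icc (0:ℝ) 1, h y) = 1 →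
      ∀ (F : Measure (Fin P → ℝ)), IsProbabilityMeasure F →
      ∀ (u v : ℝ → (Fin P → ℝ) → ℝ),
        Measurable (Function.uncurry u) → Measurable (Function.uncurry v) →
      ∀ M : ℝ,
        (∀ y ∈ Set.Icc (0:ℝ) 1, ∀ x ∈ Set.univ.pi fun _ : Fin P => Set.Icc (0:ℝ) 1,
          |u y x - v y x| ≤ M) →
      ∀ (f : (ℝ → (Fin P → ℝ) → ℝ) → ℝ → (Fin P → ℝ) → ℝ),
        f = (fun w y x => h y * Φ (w y x) / ∫ t in Set.Icc (0:ℝ) 1, h t * Φ (w t x)) →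
        (∫ x in Set.univ.pi fun _ : Fin P => Set.Icc (0:ℝ) 1,
            (∫ y in Set.Icc (0:ℝ) 1, f u y x * Real.log (f u y x / f v y x) ^ 2) ∂F)
          ≤ C * M ^ 2 * Real.exp (𝒦 * M) * (1 + 2 * 𝒦 * M) ^ 2 := by
  refine ⟨4 * 𝒦 ^ 2, by positivity, ?_⟩
  intro P Φ φ hd hm hΦ01 hk h hmesh hnn hint1 F hF u v humeas hvmeas M hMbound f hf
  have hΦpos : ∀ x, 0 < Φ x := fun x => (hΦ01 x).1
  have hΦdiff : Differentiable ℝ Φ := fun x => (hd x).differentiableAt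
  have hΦcont : Continuous Φ := hΦdiff.continuous
  have hlog : ∀ a b : ℝ, |Real.log (Φ a) - Real.log (Φ b)| ≤ 𝒦 * |a - b| :=
    aux_logPhi 𝒦 Φ φ hd hm hΦpos hk
  -- basic facts
  set S : Set ℝ := Set.Icc (0:ℝ) 1 with hS
  set cube : Set (Fin P → ℝ) := Set.univ.pi fun _ : Fin P => Set.Icc (0:ℝ) 1 with hcube
  have hcube_meas : MeasurableSet cube :=
    MeasurableSet.univ_pi fun _ => measurableSet_Icc
  have hx0 : (fun _ : Fin P => (0:ℝ)) ∈ cube := by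
    intro i _; exact ⟨le_refl 0, zero_le_one⟩
  have hM0 : 0 ≤ M :=
    le_trans (abs_nonneg _)
      (hMbound 0 ⟨le_refl 0, zero_le_one⟩ (fun _ => 0) hx0)
  -- h is integrable on S
  have hInth : Integrable h (volume.restrict S) := by
    by_contra hc
    rw [integral_undef hc] at hint1
    exact one_ne_zero hint1.symm
  -- measurability of the integrands
  have hwmeas : ∀ (w : ℝ → (Fin P → ℝ) → ℝ), Measurable (Function.uncurry w) →
      ∀ x, Measurable fun y => h y * Φ (w y x) := by
    intro w hw x
    exact hmesh.mul (hΦcont.measurable.comp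
      (hw.comp (measurable_id.prodMk measurable_const)))
  -- integrability
  have hwint : ∀ (w : ℝ → (Fin P → ℝ) → ℝ), Measurable (Function.uncurry w) →
      ∀ x, Integrable (fun y => h y * Φ (w y x)) (volume.restrict S) := by
    intro w hw x
    refine hInth.mono' ((hwmeas w hw x).aestronglyMeasurable) ?_
    filter_upwards with y
    rw [Real.norm_eq_abs, abs_of_nonneg (mul_nonneg (hnn y) (hΦpos _).le)]
    nlinarith [hnn y, (hΦ01 (w y x)).1, (hΦ01 (w y x)).2]
  -- positivity of normalizers
  have hZpos : ∀ (w : ℝ → (Fin P → ℝ) → ℝ), Measurable (Function.uncurry w) →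
      ∀ x, 0 < ∫ t in S, h t * Φ (w t x) := by
    intro w hw x
    rcases lt_or_eq_of_le (integral_nonneg (fun t => mul_nonneg (hnn t) (hΦpos _).le)
      : 0 ≤ ∫ t in S, h t * Φ (w t x)) with hlt | heq
    · exact hlt
    · exfalso
      have hzero : (fun t => h t * Φ (w t x)) =ᵐ[volume.restrict S] 0 :=
        (integral_eq_zero_iff_of_nonneg_ae
          (Filter.Eventually.of_forall fun t => mul_nonneg (hnn t) (hΦpos _).le)
          (hwint w hw x)).mp heq.symm
      have hh0 : h =ᵐ[volume.restrict S] 0 := by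
        filter_upwards [hzero] with t ht
        have := (hΦpos (w t x)).ne'
        simpa [this] using ht
      rw [integral_congr_ae hh0] at hint1
      simp at hint1
  -- comparison of normalizers for x in the cube
  have hZcomp : ∀ x ∈ cube, ∀ (w w' : ℝ → (Fin P → ℝ) → ℝ),
      Measurable (Function.uncurry w) → Measurable (Function.uncurry w') →
      (∀ t ∈ S, |w t x - w' t x| ≤ M) →
      (∫ t in S, h t * Φ (w t x)) ≤ Real.exp (𝒦 * M) * ∫ t in S, h t * Φ (w' t x) := by
    intro x hx w w' hw hw' hbd
    have hpt : ∀ t ∈ S, h t * Φ (w t x) ≤ Real.exp (𝒦 * M) * (h t * Φ (w' t x)) := by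
      intro t ht
      have h1 : Real.log (Φ (w t x)) - Real.log (Φ (w' t x)) ≤ 𝒦 * M := by
        have := hlog (w t x) (w' t x)
        have h2 : 𝒦 * |w t x - w' t x| ≤ 𝒦 * M :=
          mul_le_mul_of_nonneg_left (hbd t ht) h𝒦.le
        calc Real.log (Φ (w t x)) - Real.log (Φ (w' t x))
            ≤ |Real.log (Φ (w t x)) - Real.log (Φ (w' t x))| := le_abs_self _
          _ ≤ 𝒦 * M := le_trans this h2
      have h3 : Φ (w t x) ≤ Real.exp (𝒦 * M) * Φ (w' t x) := by
        have := Real.exp_le_exp.mpr (by linarith :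
          Real.log (Φ (w t x)) ≤ 𝒦 * M + Real.log (Φ (w' t x)))
        rwa [Real.exp_log (hΦpos _), Real.exp_add, Real.exp_log (hΦpos _)] at this
      calc h t * Φ (w t x) ≤ h t * (Real.exp (𝒦 * M) * Φ (w' t x)) :=
            mul_le_mul_of_nonneg_left h3 (hnn t)
        _ = Real.exp (𝒦 * M) * (h t * Φ (w' t x)) := by ring
    have hintc : Integrable (fun t => Real.exp (𝒦 * M) * (h t * Φ (w' t x)))
        (volume.restrict S) := (hwint w' hw' x).const_mul _
    have := integral_mono_of_nonneg
      (Filter.Eventually.of_forall fun t => mul_nonneg (hnn t) (hΦpos _).le)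
      hintc
      (ae_restrict_of_forall_mem measurableSet_Icc hpt)
    simpa [integral_const_mul] using this
  -- the main pointwise estimate and the inner integral
  have hinner : ∀ x ∈ cube,
      (∫ y in S, f u y x * Real.log (f u y x / f v y x) ^ 2) ≤ (2 * 𝒦 * M) ^ 2 := by
    intro x hx
    set Zu : ℝ := ∫ t in S, h t * Φ (u t x) with hZu
    set Zv : ℝ := ∫ t in S, h t * Φ (v t x) with hZv
    have hZupos : 0 < Zu := hZpos u humeas x
    have hZvpos : 0 < Zv := hZpos v hvmeas x
    have hbd1 : ∀ t ∈ S, |u t x - v t x| ≤ M := fun t ht => hMbound t ht x hx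
    have hbd2 : ∀ t ∈ S, |v t x - u t x| ≤ M := by
      intro t ht; rw [abs_sub_comm]; exact hbd1 t ht
    have hZuv : Zu ≤ Real.exp (𝒦 * M) * Zv := hZcomp x hx u v humeas hvmeas hbd1
    have hZvu : Zv ≤ Real.exp (𝒦 * M) * Zu := hZcomp x hx v u hvmeas humeas hbd2
    have hlogZ : |Real.log Zu - Real.log Zv| ≤ 𝒦 * M := by
      rw [abs_sub_le_iff]
      constructor
      · have h4 := Real.log_le_log hZupos hZuv
        rw [Real.log_mul (Real.exp_ne_zero _) hZvpos.ne', Real.log_exp] at h4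
        linarith
      · have h4 := Real.log_le_log hZvpos hZvu
        rw [Real.log_mul (Real.exp_ne_zero _) hZupos.ne', Real.log_exp] at h4
        linarith
    -- pointwise bound on the integrand
    have hfnn : ∀ y, 0 ≤ f u y x := by
      intro y
      rw [hf]
      exact div_nonneg (mul_nonneg (hnn y) (hΦpos _).le) hZupos.le
    have hpt : ∀ y ∈ S,
        f u y x * Real.log (f u y x / f v y x) ^ 2 ≤ (2 * 𝒦 * M) ^ 2 * f u y x := by
      intro y hy
      rcases eq_or_lt_of_le (hnn y) with hy0 | hy0
      · have : f u y x = 0 := by rw [hf]; simp [← hy0]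
        rw [this]; simp
      · have hfu : f u y x = h y * Φ (u y x) / Zu := by rw [hf]
        have hfv : f v y x = h y * Φ (v y x) / Zv := by rw [hf]
        have hfupos : 0 < f u y x := by
          rw [hfu]; exact div_pos (mul_pos hy0 (hΦpos _)) hZupos
        have hfvpos : 0 < f v y x := by
          rw [hfv]; exact div_pos (mul_pos hy0 (hΦpos _)) hZvpos
        have hlogratio : |Real.log (f u y x / f v y x)| ≤ 2 * 𝒦 * M := by
          rw [Real.log_div hfupos.ne' hfvpos.ne', hfu, hfv,
            Real.log_div (mul_pos hy0 (hΦpos _)).ne' hZupos.ne',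
            Real.log_div (mul_pos hy0 (hΦpos _)).ne' hZvpos.ne',
            Real.log_mul hy0.ne' (hΦpos _).ne',
            Real.log_mul hy0.ne' (hΦpos _).ne']
          have h1 := hlog (u y x) (v y x)
          have h2 : 𝒦 * |u y x - v y x| ≤ 𝒦 * M :=
            mul_le_mul_of_nonneg_left (hbd1 y hy) h𝒦.le
          have h3 : |Real.log (Φ (u y x)) - Real.log (Φ (v y x))| ≤ 𝒦 * M :=
            le_trans h1 h2
          calc |Real.log (h y) + Real.log (Φ (u y x)) - Real.log Zu -
              (Real.log (h y) + Real.log (Φ (v y x)) - Real.log Zv)|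
              = |(Real.log (Φ (u y x)) - Real.log (Φ (v y x))) +
                  (Real.log Zv - Real.log Zu)| := by ring_nf
            _ ≤ |Real.log (Φ (u y x)) - Real.log (Φ (v y x))| +
                  |Real.log Zv - Real.log Zu| := abs_add_le _ _
            _ ≤ 𝒦 * M + 𝒦 * M := by
                refine add_le_add h3 ?_
                rw [abs_sub_comm]; exact hlogZ
            _ = 2 * 𝒦 * M := by ring
        have hsq : Real.log (f u y x / f v y x) ^ 2 ≤ (2 * 𝒦 * M) ^ 2 := by
          rw [← sq_abs]
          exact pow_le_pow_left₀ (abs_nonneg _) hlogratio 2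
        calc f u y x * Real.log (f u y x / f v y x) ^ 2
            ≤ f u y x * (2 * 𝒦 * M) ^ 2 := mul_le_mul_of_nonneg_left hsq (hfnn y)
          _ = (2 * 𝒦 * M) ^ 2 * f u y x := by ring
    -- ∫ f u dy = 1
    have hfint1 : (∫ y in S, f u y x) = 1 := by
      have : (fun y => f u y x) = fun y => (h y * Φ (u y x)) / Zu := by
        funext y; rw [hf]
      rw [this, integral_div, ← hZu, div_self hZupos.ne']
    have hintc : Integrable (fun y => (2 * 𝒦 * M) ^ 2 * f u y x) (volume.restrict S) := by
      have heq : (fun y => (2 * 𝒦 * M) ^ 2 * f u y x)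
          = fun y => (2 * 𝒦 * M) ^ 2 * ((h y * Φ (u y x)) / Zu) := by
        funext y; rw [hf]
      rw [heq]
      exact (((hwint u humeas x).div_const Zu).const_mul _)
    have hmono := integral_mono_of_nonneg
      (Filter.Eventually.of_forall fun y => mul_nonneg (hfnn y) (sq_nonneg _))
      hintc
      (ae_restrict_of_forall_mem measurableSet_Icc hpt)
    calc (∫ y in S, f u y x * Real.log (f u y x / f v y x) ^ 2)
        ≤ ∫ y in S, (2 * 𝒦 * M) ^ 2 * f u y x := hmono
      _ = (2 * 𝒦 * M) ^ 2 * ∫ y in S, f u y x := integral_const_mul _ _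
      _ = (2 * 𝒦 * M) ^ 2 := by rw [hfint1, mul_one]
  -- nonnegativity of the inner integral for every x
  have hinner_nn : ∀ x,
      0 ≤ ∫ y in S, f u y x * Real.log (f u y x / f v y x) ^ 2 := by
    intro x
    refine integral_nonneg fun y => mul_nonneg ?_ (sq_nonneg _)
    rw [hf]
    exact div_nonneg (mul_nonneg (hnn y) (hΦpos _).le) (hZpos u humeas x).le
  -- outer integral
  have houter : (∫ x in cube, (∫ y in S, f u y x * Real.log (f u y x / f v y x) ^ 2) ∂F)
      ≤ (2 * 𝒦 * M) ^ 2 := by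
    have hae : ∀ᵐ x ∂(F.restrict cube),
        ‖∫ y in S, f u y x * Real.log (f u y x / f v y x) ^ 2‖ ≤ (2 * 𝒦 * M) ^ 2 := by
      refine ae_restrict_of_forall_mem hcube_meas fun x hx => ?_
      rw [Real.norm_eq_abs, abs_of_nonneg (hinner_nn x)]
      exact hinner x hx
    have := norm_integral_le_of_norm_le_const hae
    have hle : ((F.restrict cube) Set.univ).toReal ≤ 1 := by
      rw [Measure.restrict_apply_univ]
      exact ENNReal.toReal_le_of_le_ofReal zero_le_one (by simpa using prob_le_one)
    calc (∫ x in cube, (∫ y in S, f u y x * Real.log (f u y x / f v y x) ^ 2) ∂F)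
        ≤ ‖∫ x in cube, (∫ y in S, f u y x * Real.log (f u y x / f v y x) ^ 2) ∂F‖ :=
          le_abs_self _
      _ ≤ (2 * 𝒦 * M) ^ 2 * ((F.restrict cube) Set.univ).toReal := this
      _ ≤ (2 * 𝒦 * M) ^ 2 * 1 := by
          exact mul_le_mul_of_nonneg_left hle (by positivity)
      _ = (2 * 𝒦 * M) ^ 2 := mul_one _
  -- conclude
  have hexp : 1 ≤ Real.exp (𝒦 * M) := Real.one_le_exp (by positivity)
  have hsq1 : 1 ≤ (1 + 2 * 𝒦 * M) ^ 2 := by nlinarith [mul_nonneg h𝒦.le hM0]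
  calc (∫ x in cube, (∫ y in S, f u y x * Real.log (f u y x / f v y x) ^ 2) ∂F)
      ≤ (2 * 𝒦 * M) ^ 2 := houter
    _ = 4 * 𝒦 ^ 2 * M ^ 2 := by ring
    _ ≤ 4 * 𝒦 ^ 2 * M ^ 2 * Real.exp (𝒦 * M) * (1 + 2 * 𝒦 * M) ^ 2 := by
        have h1 : 4 * 𝒦 ^ 2 * M ^ 2 ≤ 4 * 𝒦 ^ 2 * M ^ 2 * Real.exp (𝒦 * M) :=
          le_mul_of_one_le_right (by positivity) hexp
        have h2 : 4 * 𝒦 ^ 2 * M ^ 2 * Real.exp (𝒦 * M) ≤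
            4 * 𝒦 ^ 2 * M ^ 2 * Real.exp (𝒦 * M) * (1 + 2 * 𝒦 * M) ^ 2 :=
          le_mul_of_one_le_right (by positivity) hsq1
        linarith
end

section
/- Let ν > 0 and p = (ν + 1)/2. Then for every μ ≥ 0, ∫_μ^∞ (1 + x²/ν)^{−p} dx ≥ (√ν / (2p − 1)) (1 + μ²/ν)^{−p + 1/2}. -/
open MeasureTheory Real Set Filter Topology

/-! Since `x / √ν ≤ √(1 + x²/ν)`, the integrand dominates
`x / √ν · (1 + x²/ν)^(-p - 1/2)` on `[0, ∞)`, whose integral over `(μ, ∞)` is computed in closed form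
from the antiderivative `-(√ν / (2p - 1)) (1 + x²/ν)^(-p + 1/2)`. -/

section StudentKernel

variable {ν p : ℝ}

lemma integrable_one_add_sq_div_rpow_neg (hν : 0 < ν) (hp : 1 / 2 < p) :
    Integrable fun x : ℝ => (1 + x ^ 2 / ν) ^ (-p) := by
  have hfin : (Module.finrank ℝ ℝ : ℝ) < 2 * p := by simp; linarith
  refine ((integrable_rpow_neg_one_add_norm_sq (μ := volume) hfin).comp_div
    (sqrt_pos.2 hν).ne').congr (Eventually.of_forall fun x => ?_)
  simp only [norm_eq_abs, sq_abs, div_pow, sq_sqrt hν.le]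
  ring_nf

lemma hasDerivAt_one_add_sq_div_rpow (hν : 0 < ν) (q x : ℝ) :
    HasDerivAt (fun x : ℝ => (1 + x ^ 2 / ν) ^ q)
      (q * (2 * x / ν) * (1 + x ^ 2 / ν) ^ (q - 1)) x := by
  have hbase : HasDerivAt (fun x : ℝ => 1 + x ^ 2 / ν) (2 * x / ν) x := by
    simpa using ((hasDerivAt_pow 2 x).div_const ν).const_add 1
  simpa [mul_comm, mul_assoc, mul_left_comm] using
    hbase.rpow_const (p := q) (Or.inl (by positivity))

lemma tendsto_one_add_sq_div_rpow_atTop (hν : 0 < ν) {q : ℝ} (hq : q < 0) :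
    Tendsto (fun x : ℝ => (1 + x ^ 2 / ν) ^ q) atTop (𝓝 0) := by
  have hbase : Tendsto (fun x : ℝ => 1 + x ^ 2 / ν) atTop atTop :=
    tendsto_atTop_add_const_left _ _ ((tendsto_pow_atTop two_ne_zero).atTop_div_const hν)
  have hrpow : Tendsto (fun y : ℝ => y ^ q) atTop (𝓝 0) := by
    simpa using tendsto_rpow_neg_atTop (neg_pos.2 hq)
  exact hrpow.comp hbase

lemma hasDerivAt_const_mul_one_add_sq_div_rpow (hν : 0 < ν) (hp : 1 / 2 < p) (x : ℝ) :
    HasDerivAt (fun x : ℝ => -(√ν / (2 * p - 1)) * (1 + x ^ 2 / ν) ^ (-p + 1 / 2))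
      (x / √ν * (1 + x ^ 2 / ν) ^ (-p - 1 / 2)) x := by
  refine ((hasDerivAt_one_add_sq_div_rpow hν _ x).const_mul _).congr_deriv ?_
  have hs : 0 < √ν := sqrt_pos.2 hν
  have h2p : 2 * p - 1 ≠ 0 := by linarith
  rw [show -p + 1 / 2 - 1 = -p - 1 / 2 by ring]
  field_simp
  rw [sq_sqrt hν.le]
  ring

lemma mul_one_add_sq_div_rpow_le (hν : 0 < ν) {x : ℝ} (hx : 0 ≤ x) :
    x / √ν * (1 + x ^ 2 / ν) ^ (-p - 1 / 2) ≤ (1 + x ^ 2 / ν) ^ (-p) := by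
  have hA : 0 < 1 + x ^ 2 / ν := by positivity
  have hx_le : x / √ν ≤ (1 + x ^ 2 / ν) ^ (1 / 2 : ℝ) := by
    rw [← sqrt_eq_rpow]
    calc x / √ν = √(x ^ 2 / ν) := by rw [sqrt_div (sq_nonneg x), sqrt_sq hx]
      _ ≤ √(1 + x ^ 2 / ν) := sqrt_le_sqrt (by linarith)
  calc x / √ν * (1 + x ^ 2 / ν) ^ (-p - 1 / 2)
      ≤ (1 + x ^ 2 / ν) ^ (1 / 2 : ℝ) * (1 + x ^ 2 / ν) ^ (-p - 1 / 2) := by gcongr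
    _ = (1 + x ^ 2 / ν) ^ (-p) := by rw [← rpow_add hA]; ring_nf

end StudentKernel

/-- **Lower bound on the Student-t survival integral.**
For `ν > 0`, `p = (ν + 1)/2`, and `μ ≥ 0`:
`∫_μ^∞ (1 + x²/ν)^{-p} dx ≥ (√ν / (2p - 1)) (1 + μ²/ν)^{-p + 1/2}`. -/
theorem stmt13 (ν : ℝ) (hν : 0 < ν) (p : ℝ) (hp : p = (ν + 1) / 2)
    (μ : ℝ) (hμ : 0 ≤ μ) :
    Real.sqrt ν / (2 * p - 1) * (1 + μ ^ 2 / ν) ^ (-p + 1 / 2)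
      ≤ ∫ x in Set.Ioi μ, (1 + x ^ 2 / ν) ^ (-p) := by
  have hp_half : 1 / 2 < p := by linarith
  have hderiv := fun x (_ : x ∈ Ici μ) => hasDerivAt_const_mul_one_add_sq_div_rpow hν hp_half x
  have hlim : Tendsto (fun x : ℝ => -(√ν / (2 * p - 1)) * (1 + x ^ 2 / ν) ^ (-p + 1 / 2))
      atTop (𝓝 0) := by
    simpa using (tendsto_one_add_sq_div_rpow_atTop hν (q := -p + 1 / 2) (by linarith)).const_mul
      (-(√ν / (2 * p - 1)))
  have hnonneg : ∀ x ∈ Ioi μ, 0 ≤ x / √ν * (1 + x ^ 2 / ν) ^ (-p - 1 / 2) := fun x hx => by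
    have : 0 < x := hμ.trans_lt hx
    positivity
  calc √ν / (2 * p - 1) * (1 + μ ^ 2 / ν) ^ (-p + 1 / 2)
      = ∫ x in Ioi μ, x / √ν * (1 + x ^ 2 / ν) ^ (-p - 1 / 2) := by
        rw [integral_Ioi_of_hasDerivAt_of_nonneg' hderiv hnonneg hlim]; ring
    _ ≤ ∫ x in Ioi μ, (1 + x ^ 2 / ν) ^ (-p) :=
        setIntegral_mono_on (integrableOn_Ioi_deriv_of_nonneg' hderiv hnonneg hlim)
          (integrable_one_add_sq_div_rpow_neg hν hp_half).integrableOn measurableSet_Ioi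
          fun x hx => mul_one_add_sq_div_rpow_le hν (hμ.trans hx.out.le)
end

section
/- Let ν > 0, let t_ν(μ) = c_ν (1 + μ²/ν)^{−(ν+1)/2} be the density of the Student's t distribution with ν degrees of freedom, where c_ν = Γ((ν+1)/2)/(√(νπ) Γ(ν/2)), and let T_ν(μ) = ∫_{−∞}^μ t_ν(x) dx be its cumulative distribution function. Then for every μ ∈ ℝ, t_ν(μ)/T_ν(μ) ≤ √ν. In particular, the Student's t_ν link satisfies Condition L with constant 𝒦 = √ν. -/
open MeasureTheory Set Filter Real Topology

/-!
Writing `Γ(s) (1 + y²)^(-s) = ∫₀^∞ u^(s-1) e^(-(1+y²)u) du` and doing the Gaussian integral in `y`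
first gives `∫ (1 + y²)^(-s) dy = √π Γ(s - 1/2) / Γ(s)`; hence `c_ν` normalises `t_ν`, and `T_ν` is
the cdf of a positive continuous density.

For the bound, let `k(x) = (1 + x²/ν)^(-(ν+1)/2)`. If `G(-∞) = 0` and `G' ≤ √ν k`, then
`√ν ∫_{-∞}^x k - G` is nondecreasing and vanishes at `-∞`, so it is enough to find such a `G`
with `k ≤ G`. For `ν ≥ 1` take `G = k`: `k'/k = -(ν+1)x/(ν+x²) ≤ √ν` by AM-GM. For `ν ≤ 1`
substitute `x = √ν tan θ`, so that `k = cos^(ν+1) θ`, and take `G = (θ + π/2)^ν`: then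
`G' = √ν (θ + π/2)^(ν-1) cos² θ ≤ √ν k` because `cos θ ≤ θ + π/2` and `ν - 1 ≤ 0`.
-/

section GammaIntegral

variable {s : ℝ}

theorem integral_Ioi_rpow_mul_exp_neg_one_add_sq_mul (hs : 0 < s) (y : ℝ) :
    ∫ u in Ioi (0 : ℝ), u ^ (s - 1) * exp (-((1 + y ^ 2) * u)) =
      Gamma s * (1 + y ^ 2) ^ (-s) := by
  have hy : 0 < 1 + y ^ 2 := by positivity
  rw [integral_rpow_mul_exp_neg_mul_Ioi hs hy, one_div, inv_rpow hy.le, ← rpow_neg hy.le,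
    mul_comm]

theorem exp_neg_one_add_sq_mul (u y : ℝ) :
    exp (-((1 + y ^ 2) * u)) = exp (-u) * exp (-u * y ^ 2) := by
  rw [← exp_add]; ring_nf

theorem integral_rpow_mul_exp_neg_one_add_sq_mul {u : ℝ} (hu : 0 < u) :
    ∫ y : ℝ, u ^ (s - 1) * exp (-((1 + y ^ 2) * u)) =
      √π * (exp (-u) * u ^ (s - 1 / 2 - 1)) := by
  simp_rw [exp_neg_one_add_sq_mul, ← mul_assoc]
  rw [integral_const_mul, integral_gaussian, sqrt_div pi_pos.le, sqrt_eq_rpow u,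
    mul_div_assoc', div_eq_mul_inv, ← rpow_neg hu.le,
    show s - 1 / 2 - 1 = s - 1 + -(1 / 2) by ring, rpow_add hu]
  ring

theorem integrable_rpow_mul_exp_neg_one_add_sq_mul (hs : 1 / 2 < s) :
    Integrable (Function.uncurry fun u y : ℝ => u ^ (s - 1) * exp (-((1 + y ^ 2) * u)))
      ((volume.restrict (Ioi 0)).prod volume) := by
  refine (integrable_prod_iff (by fun_prop)).2 ⟨?_, ?_⟩
  · rw [ae_restrict_iff' measurableSet_Ioi]
    filter_upwards with u (hu : 0 < u)
    simp_rw [Function.uncurry_apply_pair, exp_neg_one_add_sq_mul, ← mul_assoc]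
    exact (integrable_exp_neg_mul_sq hu).const_mul _
  · refine ((GammaIntegral_convergent (by linarith : 0 < s - 1 / 2)).const_mul √π).congr ?_
    rw [EventuallyEq, ae_restrict_iff' measurableSet_Ioi]
    filter_upwards with u (hu : 0 < u)
    have hnonneg (y : ℝ) : 0 ≤ u ^ (s - 1) * exp (-((1 + y ^ 2) * u)) := by positivity
    simp_rw [Function.uncurry_apply_pair, norm_of_nonneg (hnonneg _)]
    exact (integral_rpow_mul_exp_neg_one_add_sq_mul hu).symm

theorem integral_one_add_sq_rpow_neg (hs : 1 / 2 < s) :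
    ∫ y : ℝ, (1 + y ^ 2) ^ (-s) = √π * Gamma (s - 1 / 2) / Gamma s := by
  have hs0 : 0 < s := by linarith
  rw [eq_div_iff (Gamma_pos_of_pos hs0).ne', mul_comm, ← integral_const_mul]
  simp_rw [← integral_Ioi_rpow_mul_exp_neg_one_add_sq_mul hs0]
  rw [← integral_integral_swap (integrable_rpow_mul_exp_neg_one_add_sq_mul hs),
    setIntegral_congr_fun measurableSet_Ioi fun u hu => integral_rpow_mul_exp_neg_one_add_sq_mul hu,
    integral_const_mul, Gamma_eq_integral (by linarith)]

end GammaIntegral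

section Cdf

variable {f : ℝ → ℝ}

theorem hasDerivAt_integral_Iic (hf : Integrable f) (hcont : Continuous f) (a : ℝ) :
    HasDerivAt (fun x => ∫ y in Iic x, f y) (f a) a := by
  have hsplit : (fun x => ∫ y in Iic x, f y) =
      fun x => (∫ y in Iic 0, f y) + ∫ y in 0..x, f y := by
    ext x
    rw [← intervalIntegral.integral_Iic_sub_Iic hf.integrableOn hf.integrableOn]
    ring
  rw [hsplit]
  exact (intervalIntegral.integral_hasDerivAt_right (hcont.intervalIntegrable _ _)
    (hcont.stronglyMeasurableAtFilter _ _) hcont.continuousAt).const_add _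

theorem strictMono_integral_Iic (hf : Integrable f) (hcont : Continuous f) (hpos : ∀ x, 0 < f x) :
    StrictMono fun x => ∫ y in Iic x, f y :=
  strictMono_of_hasDerivAt_pos (hasDerivAt_integral_Iic hf hcont) hpos

theorem integral_Iic_pos (hf : Integrable f) (hcont : Continuous f) (hpos : ∀ x, 0 < f x)
    (x : ℝ) : 0 < ∫ y in Iic x, f y :=
  ((strictMono_integral_Iic hf hcont hpos).monotone.le_of_tendsto
    (tendsto_integral_Iic_zero tendsto_id) (x - 1)).trans_lt
    (strictMono_integral_Iic hf hcont hpos (sub_one_lt x))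

theorem integral_Iic_lt_integral (hf : Integrable f) (hcont : Continuous f)
    (hpos : ∀ x, 0 < f x) (x : ℝ) : ∫ y in Iic x, f y < ∫ y, f y :=
  (strictMono_integral_Iic hf hcont hpos (lt_add_one x)).trans_le
    (setIntegral_le_integral hf (ae_of_all _ fun y => (hpos y).le))

end Cdf

theorem le_of_hasDerivAt_le_of_tendsto_atBot {F G F' G' : ℝ → ℝ} {l : ℝ}
    (hF : ∀ x, HasDerivAt F (F' x) x) (hG : ∀ x, HasDerivAt G (G' x) x) (hle : ∀ x, G' x ≤ F' x)
    (hFl : Tendsto F atBot (𝓝 l)) (hGl : Tendsto G atBot (𝓝 l)) (x : ℝ) : G x ≤ F x := by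
  have hmono : Monotone fun x => F x - G x :=
    monotone_of_hasDerivAt_nonneg (fun x => (hF x).sub (hG x)) fun x => sub_nonneg.2 (hle x)
  exact sub_nonneg.1 (hmono.le_of_tendsto (by simpa using hFl.sub hGl) x)

noncomputable def studentKernel (ν x : ℝ) : ℝ :=
  (1 + x ^ 2 / ν) ^ (-((ν + 1) / 2))

section StudentKernel

variable {ν : ℝ}

theorem one_add_sq_div_pos (hν : 0 < ν) (x : ℝ) : 0 < 1 + x ^ 2 / ν := by positivity

theorem studentKernel_eq_comp_div (hν : 0 < ν) (x : ℝ) :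
    studentKernel ν x = (1 + (x / √ν) ^ 2) ^ (-((ν + 1) / 2)) := by
  rw [studentKernel, div_pow, sq_sqrt hν.le]

theorem studentKernel_pos (hν : 0 < ν) (x : ℝ) : 0 < studentKernel ν x :=
  rpow_pos_of_pos (one_add_sq_div_pos hν x) _

theorem continuous_studentKernel (hν : 0 < ν) : Continuous (studentKernel ν) :=
  (continuous_const.add ((continuous_pow 2).div_const ν)).rpow_const
    fun x => Or.inl (one_add_sq_div_pos hν x).ne'

theorem integrable_studentKernel (hν : 0 < ν) : Integrable (studentKernel ν) := by
  have h : Integrable fun y : ℝ => (1 + ‖y‖ ^ 2) ^ (-(ν + 1) / 2) :=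
    integrable_rpow_neg_one_add_norm_sq (by simpa using hν)
  simp_rw [norm_eq_abs, sq_abs, neg_div] at h
  simpa only [← studentKernel_eq_comp_div hν] using h.comp_div (sqrt_pos.2 hν).ne'

theorem integral_studentKernel (hν : 0 < ν) :
    ∫ x, studentKernel ν x = √(ν * π) * Gamma (ν / 2) / Gamma ((ν + 1) / 2) := by
  simp_rw [studentKernel_eq_comp_div hν]
  rw [Measure.integral_comp_div (fun y => (1 + y ^ 2) ^ (-((ν + 1) / 2))),
    integral_one_add_sq_rpow_neg (by linarith), abs_of_pos (sqrt_pos.2 hν), smul_eq_mul,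
    sqrt_mul hν.le, show (ν + 1) / 2 - 1 / 2 = ν / 2 by ring]
  ring

theorem hasDerivAt_studentKernel (hν : 0 < ν) (x : ℝ) :
    HasDerivAt (studentKernel ν) (-(ν + 1) * x / (ν + x ^ 2) * studentKernel ν x) x := by
  have hpos := one_add_sq_div_pos hν x
  have h := (((hasDerivAt_pow 2 x).div_const ν).const_add 1).rpow_const
    (p := -((ν + 1) / 2)) (Or.inl hpos.ne')
  refine (h : HasDerivAt (studentKernel ν) _ x).congr_deriv ?_
  rw [studentKernel, rpow_sub hpos, rpow_one]
  field_simp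
  ring

theorem tendsto_studentKernel_atBot (hν : 0 < ν) : Tendsto (studentKernel ν) atBot (𝓝 0) := by
  have hsq : Tendsto (fun x : ℝ => 1 + x ^ 2 / ν) atBot atTop :=
    tendsto_atTop_add_const_left _ 1
      ((by simpa [Function.comp_def] using
        (tendsto_pow_atTop (α := ℝ) two_ne_zero).comp tendsto_neg_atBot_atTop :
        Tendsto (fun x : ℝ => x ^ 2) atBot atTop).atTop_div_const hν)
  exact (tendsto_rpow_neg_atTop (by linarith)).comp hsq

theorem studentKernel_eq_cos_arctan_rpow (hν : 0 < ν) (x : ℝ) :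
    studentKernel ν x = cos (arctan (x / √ν)) ^ (ν + 1) := by
  rw [studentKernel_eq_comp_div hν, cos_arctan, sqrt_eq_rpow (1 + _), one_div,
    ← rpow_neg (by positivity), ← rpow_mul (by positivity)]
  ring_nf

theorem tendsto_sqrt_mul_integral_Iic_studentKernel_atBot :
    Tendsto (fun m => √ν * ∫ x in Iic m, studentKernel ν x) atBot (𝓝 0) := by
  simpa using (tendsto_integral_Iic_zero tendsto_id).const_mul √ν

theorem hasDerivAt_sqrt_mul_integral_Iic_studentKernel (hν : 0 < ν) (m : ℝ) :
    HasDerivAt (fun m => √ν * ∫ x in Iic m, studentKernel ν x) (√ν * studentKernel ν m) m :=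
  .const_mul _ <|
    hasDerivAt_integral_Iic (integrable_studentKernel hν) (continuous_studentKernel hν) m

theorem neg_mul_div_add_sq_le_sqrt (hν : 1 ≤ ν) (x : ℝ) : -(ν + 1) * x / (ν + x ^ 2) ≤ √ν := by
  have hsq : √ν ^ 2 = ν := sq_sqrt (by linarith)
  have hone : 1 ≤ √ν := one_le_sqrt.2 hν
  rw [div_le_iff₀ (by positivity)]
  rcases le_total x 0 with hx | hx
  · nlinarith [mul_nonneg (by linarith : (0 : ℝ) ≤ √ν) (sq_nonneg (x + √ν)),
      mul_nonneg (by nlinarith : 0 ≤ √ν ^ 2 - 1) (neg_nonneg.2 hx)]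
  · nlinarith [mul_nonneg (by linarith : (0 : ℝ) ≤ √ν) (sq_nonneg x)]

theorem studentKernel_le_sqrt_mul_integral_Iic_of_one_le (hν : 1 ≤ ν) (μ : ℝ) :
    studentKernel ν μ ≤ √ν * ∫ x in Iic μ, studentKernel ν x := by
  have hν0 : 0 < ν := by linarith
  refine le_of_hasDerivAt_le_of_tendsto_atBot (hasDerivAt_sqrt_mul_integral_Iic_studentKernel hν0)
    (hasDerivAt_studentKernel hν0) (fun x => ?_) tendsto_sqrt_mul_integral_Iic_studentKernel_atBot
    (tendsto_studentKernel_atBot hν0) μ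
  exact mul_le_mul_of_nonneg_right (neg_mul_div_add_sq_le_sqrt hν x) (studentKernel_pos hν0 x).le

theorem cos_arctan_le_arctan_add_pi_div_two (y : ℝ) : cos (arctan y) ≤ arctan y + π / 2 := by
  rw [← sin_add_pi_div_two]
  exact sin_le (by linarith [neg_pi_div_two_lt_arctan y])

theorem studentKernel_le_sqrt_mul_integral_Iic_of_le_one (hν0 : 0 < ν) (hν : ν ≤ 1) (μ : ℝ) :
    studentKernel ν μ ≤ √ν * ∫ x in Iic μ, studentKernel ν x := by
  set θ : ℝ → ℝ := fun x => arctan (x / √ν)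
  have hcos (x : ℝ) : 0 < cos (θ x) := cos_arctan_pos _
  have hq (x : ℝ) : 0 < θ x + π / 2 := by linarith [neg_pi_div_two_lt_arctan (x / √ν)]
  have hθ (x : ℝ) : HasDerivAt θ (cos (θ x) ^ 2 / √ν) x := by
    have := (hasDerivAt_arctan (x / √ν)).comp x ((hasDerivAt_id x).div_const √ν)
    simpa [θ, Function.comp_def, cos_sq_arctan, div_eq_mul_inv] using this
  have hG (x : ℝ) : HasDerivAt (fun x => (θ x + π / 2) ^ ν)
      (cos (θ x) ^ 2 / √ν * ν * (θ x + π / 2) ^ (ν - 1)) x :=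
    ((hθ x).add_const _).rpow_const (Or.inl (hq x).ne')
  have hG' (x : ℝ) : cos (θ x) ^ 2 / √ν * ν * (θ x + π / 2) ^ (ν - 1) ≤
      √ν * studentKernel ν x := by
    have hpow : (θ x + π / 2) ^ (ν - 1) ≤ cos (θ x) ^ (ν - 1) :=
      rpow_le_rpow_of_nonpos (hcos x) (cos_arctan_le_arctan_add_pi_div_two _) (by linarith)
    rw [studentKernel_eq_cos_arctan_rpow hν0, show ν + 1 = ν - 1 + 2 by ring,
      rpow_add (hcos x), rpow_two, div_mul_eq_mul_div, mul_div_assoc, div_sqrt]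
    nlinarith [mul_le_mul_of_nonneg_left hpow (by positivity : 0 ≤ cos (θ x) ^ 2 * √ν)]
  have hGlim : Tendsto (fun x => (θ x + π / 2) ^ ν) atBot (𝓝 0) := by
    have hθlim : Tendsto (fun x => θ x + π / 2) atBot (𝓝 0) := by
      simpa using ((tendsto_arctan_atBot.mono_right nhdsWithin_le_nhds).comp
        (tendsto_id.atBot_div_const (sqrt_pos.2 hν0))).add_const (π / 2)
    simpa [Function.comp_def, zero_rpow hν0.ne'] using
      ((continuousAt_rpow_const 0 ν (Or.inr hν0.le)).tendsto.comp hθlim)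
  calc studentKernel ν μ = cos (θ μ) ^ (ν + 1) := studentKernel_eq_cos_arctan_rpow hν0 μ
    _ ≤ cos (θ μ) ^ ν :=
      rpow_le_rpow_of_exponent_ge (hcos μ) (cos_le_one _) (by linarith)
    _ ≤ (θ μ + π / 2) ^ ν :=
      rpow_le_rpow (hcos μ).le (cos_arctan_le_arctan_add_pi_div_two _) hν0.le
    _ ≤ √ν * ∫ x in Iic μ, studentKernel ν x :=
      le_of_hasDerivAt_le_of_tendsto_atBot (hasDerivAt_sqrt_mul_integral_Iic_studentKernel hν0)
        hG hG' tendsto_sqrt_mul_integral_Iic_studentKernel_atBot hGlim μ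

theorem studentKernel_le_sqrt_mul_integral_Iic (hν : 0 < ν) (μ : ℝ) :
    studentKernel ν μ ≤ √ν * ∫ x in Iic μ, studentKernel ν x := by
  rcases le_total ν 1 with hν1 | hν1
  · exact studentKernel_le_sqrt_mul_integral_Iic_of_le_one hν hν1 μ
  · exact studentKernel_le_sqrt_mul_integral_Iic_of_one_le hν1 μ

end StudentKernel

/-- **The Student's t link satisfies Condition L with 𝒦 = √ν.**
With `t_ν(μ) = c_ν (1 + μ²/ν)^{-(ν+1)/2}` (where `c_ν = Γ((ν+1)/2)/(√(νπ) Γ(ν/2))`) the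
Student-t density and `T_ν` its cdf, we have `t_ν(μ)/T_ν(μ) ≤ √ν` for all `μ`; moreover
`T_ν` is strictly increasing with `0 < T_ν < 1` and derivative `t_ν`. -/
theorem stmt14 (ν : ℝ) (hν : 0 < ν) (c : ℝ)
    (hc : c = Real.Gamma ((ν + 1) / 2) / (Real.sqrt (ν * Real.pi) * Real.Gamma (ν / 2)))
    (t T : ℝ → ℝ)
    (ht : t = fun μ => c * (1 + μ ^ 2 / ν) ^ (-((ν + 1) / 2)))
    (hT : T = fun μ => ∫ x in Set.Iic μ, t x) :
    (∀ μ, t μ / T μ ≤ Real.sqrt ν) ∧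
    StrictMono T ∧ (∀ μ, 0 < T μ ∧ T μ < 1) ∧
    ∀ μ, HasDerivAt T (t μ) μ := by
  obtain rfl : t = fun μ => c * studentKernel ν μ := ht
  subst hT
  have hΓ₁ : 0 < Gamma ((ν + 1) / 2) := Gamma_pos_of_pos (by linarith)
  have hΓ₂ : 0 < Gamma (ν / 2) := Gamma_pos_of_pos (by linarith)
  have hc0 : 0 < c := hc ▸ div_pos hΓ₁ (mul_pos (sqrt_pos.2 (mul_pos hν pi_pos)) hΓ₂)
  have hint : Integrable fun μ => c * studentKernel ν μ := (integrable_studentKernel hν).const_mul c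
  have hcont : Continuous fun μ => c * studentKernel ν μ :=
    continuous_const.mul (continuous_studentKernel hν)
  have hpos (μ : ℝ) : 0 < c * studentKernel ν μ := mul_pos hc0 (studentKernel_pos hν μ)
  have hmass : ∫ μ, c * studentKernel ν μ = 1 := by
    rw [integral_const_mul, integral_studentKernel hν, hc]
    field_simp
  refine ⟨fun μ => ?_, strictMono_integral_Iic hint hcont hpos, fun μ =>
    ⟨integral_Iic_pos hint hcont hpos μ, hmass ▸ integral_Iic_lt_integral hint hcont hpos μ⟩,
    hasDerivAt_integral_Iic hint hcont⟩
  rw [div_le_iff₀ (integral_Iic_pos hint hcont hpos μ), integral_const_mul, mul_left_comm]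
  exact mul_le_mul_of_nonneg_left (studentKernel_le_sqrt_mul_integral_Iic hν μ) hc0.le
end

section
/- Let Φ be the cumulative distribution function of the standard normal distribution on ℝ and let φ(μ) = (2π)^{−1/2} e^{−μ²/2} be its density. Then sup_{μ ∈ ℝ} φ(μ)/Φ(μ) = ∞; that is, for every K > 0 there exists μ ∈ ℝ with φ(μ)/Φ(μ) > K. In particular, the probit link fails Condition L: there is no constant 𝒦 such that φ(μ)/Φ(μ) ≤ 𝒦 for all μ. -/
/-!
Mills' inequality: for `x ≤ μ` we have `-μ e^{-x²/2} ≤ -x e^{-x²/2} = (e^{-x²/2})'`, so integrating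
over `(-∞, μ]` gives `-μ Φ(μ) ≤ φ(μ)`, i.e. `φ(μ)/Φ(μ) ≥ -μ`, which is unbounded as `μ → -∞`.
The normalizing constant `(2π)^{-1/2}` cancels in the ratio.
-/

open MeasureTheory Real Set Filter

lemma integrable_exp_neg_sq_div_two : Integrable fun x : ℝ => exp (-x ^ 2 / 2) := by
  simpa [neg_div, div_eq_inv_mul] using integrable_exp_neg_mul_sq (b := 1 / 2) (by norm_num)

lemma integrable_mul_exp_neg_sq_div_two : Integrable fun x : ℝ => x * exp (-x ^ 2 / 2) := by
  simpa [neg_div, div_eq_inv_mul] using integrable_mul_exp_neg_mul_sq (b := 1 / 2) (by norm_num)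

lemma setIntegral_Iic_exp_neg_sq_div_two_pos (μ : ℝ) : 0 < ∫ x in Iic μ, exp (-x ^ 2 / 2) := by
  rw [setIntegral_pos_iff_support_of_nonneg_ae (Eventually.of_forall fun x => (exp_pos _).le)
    integrable_exp_neg_sq_div_two.integrableOn]
  simp [Function.support, exp_ne_zero]

lemma tendsto_exp_neg_sq_div_two_atBot :
    Tendsto (fun x : ℝ => exp (-x ^ 2 / 2)) atBot (nhds 0) := by
  have hsq : Tendsto (fun x : ℝ => x ^ 2 / 2) atBot atTop := by
    simpa using ((tendsto_pow_atTop two_ne_zero).comp tendsto_neg_atBot_atTop).atTop_div_const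
      (two_pos (α := ℝ))
  refine tendsto_exp_atBot.comp ((tendsto_neg_atTop_atBot.comp hsq).congr fun x => ?_)
  simp [neg_div]

lemma integral_Iic_mul_exp_neg_sq_div_two (μ : ℝ) :
    ∫ x in Iic μ, x * exp (-x ^ 2 / 2) = -exp (-μ ^ 2 / 2) := by
  have hderiv (x : ℝ) : HasDerivAt (fun x => -exp (-x ^ 2 / 2)) (x * exp (-x ^ 2 / 2)) x := by
    have hsq : HasDerivAt (fun x : ℝ => -x ^ 2 / 2) (-x) x :=
      ((hasDerivAt_pow 2 x).neg.div_const 2).congr_deriv (by push_cast; ring)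
    exact hsq.exp.neg.congr_deriv (by ring)
  rw [integral_Iic_of_hasDerivAt_of_tendsto' (fun x _ => hderiv x)
    integrable_mul_exp_neg_sq_div_two.integrableOn
    (by simpa using tendsto_exp_neg_sq_div_two_atBot.neg), sub_zero]

lemma neg_mul_integral_Iic_exp_neg_sq_div_two_le (μ : ℝ) :
    -μ * ∫ x in Iic μ, exp (-x ^ 2 / 2) ≤ exp (-μ ^ 2 / 2) :=
  calc -μ * ∫ x in Iic μ, exp (-x ^ 2 / 2)
      = ∫ x in Iic μ, -μ * exp (-x ^ 2 / 2) := (integral_const_mul _ _).symm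
    _ ≤ ∫ x in Iic μ, -(x * exp (-x ^ 2 / 2)) := by
        refine setIntegral_mono_on (integrable_exp_neg_sq_div_two.const_mul _).integrableOn
          integrable_mul_exp_neg_sq_div_two.neg.integrableOn measurableSet_Iic fun x hx => ?_
        rw [← neg_mul]
        exact mul_le_mul_of_nonneg_right (neg_le_neg hx) (exp_pos _).le
    _ = exp (-μ ^ 2 / 2) := by rw [integral_neg, integral_Iic_mul_exp_neg_sq_div_two, neg_neg]

lemma exists_lt_exp_neg_sq_div_two_div_integral_Iic (K : ℝ) :
    ∃ μ : ℝ, K < exp (-μ ^ 2 / 2) / ∫ x in Iic μ, exp (-x ^ 2 / 2) := by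
  refine ⟨-(K + 1), ?_⟩
  rw [lt_div_iff₀ (setIntegral_Iic_exp_neg_sq_div_two_pos _)]
  have hMills := neg_mul_integral_Iic_exp_neg_sq_div_two_le (-(K + 1))
  rw [neg_neg] at hMills
  linarith [setIntegral_Iic_exp_neg_sq_div_two_pos (-(K + 1))]

/-- **The probit link fails Condition L.**
With `Φ` the standard normal cdf and `φ(μ) = (2π)^{-1/2} e^{-μ²/2}` its density, the ratio
`φ(μ)/Φ(μ)` is unbounded: for every `K > 0` there is `μ` with `φ(μ)/Φ(μ) > K`; in particular
there is no constant `𝒦` with `φ(μ)/Φ(μ) ≤ 𝒦` for all `μ`. -/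
theorem stmt15 (φ Φ : ℝ → ℝ)
    (hφ : φ = fun μ => (2 * Real.pi) ^ (-(1 / 2) : ℝ) * Real.exp (-μ ^ 2 / 2))
    (hΦ : Φ = fun μ => ∫ x in Set.Iic μ, φ x) :
    (∀ K : ℝ, 0 < K → ∃ μ : ℝ, K < φ μ / Φ μ) ∧
    ¬ ∃ 𝒦 : ℝ, ∀ μ : ℝ, φ μ / Φ μ ≤ 𝒦 := by
  have hratio (μ : ℝ) : φ μ / Φ μ = exp (-μ ^ 2 / 2) / ∫ x in Iic μ, exp (-x ^ 2 / 2) := by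
    have hc : (2 * π) ^ (-(1 / 2) : ℝ) ≠ 0 := (rpow_pos_of_pos (by positivity) _).ne'
    simp only [hΦ, hφ, integral_const_mul, mul_div_mul_left _ _ hc]
  simp only [hratio]
  refine ⟨fun K _ => exists_lt_exp_neg_sq_div_two_div_integral_Iic K, fun ⟨𝒦, h𝒦⟩ => ?_⟩
  obtain ⟨μ, hμ⟩ := exists_lt_exp_neg_sq_div_two_div_integral_Iic 𝒦
  exact (h𝒦 μ).not_gt hμ
end

section
/- Let Z be a real random variable that is symmetric about 0 and whose cumulative distribution function Φ is differentiable with density φ = Φ' and satisfies 0 < Φ(μ) < 1 for all μ. Suppose Z is light-tailed in the sense that for every 𝒦 > 0 one has P(Z > z) < e^{−𝒦 z} for all sufficiently large z. Then there is no constant 𝒦 > 0 such that φ(μ)/Φ(μ) ≤ 𝒦 for all μ ∈ ℝ; i.e., Condition L fails for Φ. -/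
open MeasureTheory

/-- **Light-tailed symmetric links fail Condition L.**
Let `Z` be a real random variable, symmetric about `0` (so `P(Z > z) = Φ(-z)` where `Φ` is
its cdf), whose cdf `Φ` is differentiable with density `φ` and satisfies `0 < Φ < 1`.
If `Z` is light-tailed — for every `𝒦 > 0`, `P(Z > z) < e^{-𝒦 z}` for all large `z` — then
there is no constant `𝒦 > 0` with `φ(μ)/Φ(μ) ≤ 𝒦` for all `μ`, i.e. Condition L fails. -/
theorem stmt16 {Ω : Type*} [MeasurableSpace Ω] (P : Measure Ω) [IsProbabilityMeasure P]
    (Z : Ω → ℝ) (hZ : Measurable Z)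
    (Φ φ : ℝ → ℝ)
    (hΦ : Φ = fun z => (P {ω | Z ω ≤ z}).toReal)
    (hderiv : ∀ z, HasDerivAt Φ (φ z) z)
    (h01 : ∀ z, 0 < Φ z ∧ Φ z < 1)
    (hsymm : ∀ z, (P {ω | z < Z ω}).toReal = Φ (-z))
    (htail : ∀ 𝒦 : ℝ, 0 < 𝒦 → ∃ z₀ : ℝ, ∀ z ≥ z₀,
        (P {ω | z < Z ω}).toReal < Real.exp (-𝒦 * z)) :
    ¬ ∃ 𝒦 : ℝ, 0 < 𝒦 ∧ ∀ μ : ℝ, φ μ / Φ μ ≤ 𝒦 := by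
  rintro ⟨K, hK, hbd⟩
  -- log Φ has derivative φ/Φ
  have hlog : ∀ x : ℝ, HasDerivAt (fun y => Real.log (Φ y)) (φ x / Φ x) x := fun x =>
    (hderiv x).log (ne_of_gt (h01 x).1)
  -- lower bound: Φ (-z) ≥ Φ 0 * exp (-K z) for z > 0
  have key : ∀ z : ℝ, 0 < z → Φ 0 * Real.exp (-K * z) ≤ Φ (-z) := by
    intro z hz
    have hlt : (-z : ℝ) < 0 := by linarith
    obtain ⟨c, hc, hceq⟩ := exists_hasDerivAt_eq_slope (fun y => Real.log (Φ y))
      (fun y => φ y / Φ y) hlt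
      (fun y _ => ((hlog y).continuousAt).continuousWithinAt)
      (fun y _ => hlog y)
    have hslope : Real.log (Φ 0) - Real.log (Φ (-z)) ≤ K * z := by
      have := hbd c
      have hne : (0 : ℝ) - (-z) = z := by ring
      rw [hne] at hceq
      have hz' : (0:ℝ) < z := hz
      have : Real.log (Φ 0) - Real.log (Φ (-z)) = (φ c / Φ c) * z := by
        field_simp at hceq ⊢
        linarith [hceq]
      rw [this]
      exact mul_le_mul_of_nonneg_right (hbd c) hz.le
    have h1 : Real.log (Φ 0) + (-K * z) ≤ Real.log (Φ (-z)) := by linarith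
    calc Φ 0 * Real.exp (-K * z) = Real.exp (Real.log (Φ 0) + (-K * z)) := by
            rw [Real.exp_add, Real.exp_log (h01 0).1]
      _ ≤ Real.exp (Real.log (Φ (-z))) := Real.exp_le_exp.mpr h1
      _ = Φ (-z) := Real.exp_log (h01 (-z)).1
  obtain ⟨z₀, hz₀⟩ := htail (2 * K) (by linarith)
  set z : ℝ := max z₀ (max 1 ((-Real.log (Φ 0)) / K + 1)) with hzdef
  have hz1 : (1:ℝ) ≤ z := le_trans (le_max_left _ _) (le_max_right _ _)
  have hzpos : 0 < z := by linarith
  have htb : Φ (-z) < Real.exp (-(2*K) * z) := by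
    rw [← hsymm z]; exact hz₀ z (le_max_left _ _)
  have hlow := key z hzpos
  have h3 : Φ 0 * Real.exp (-K * z) < Real.exp (-(2*K) * z) := lt_of_le_of_lt hlow htb
  have h4 : Φ 0 < Real.exp (-K * z) := by
    have he : Real.exp (-(2*K) * z) = Real.exp (-K * z) * Real.exp (-K * z) := by
      rw [← Real.exp_add]; ring_nf
    rw [he] at h3
    have hep : 0 < Real.exp (-K * z) := Real.exp_pos _
    exact lt_of_mul_lt_mul_right h3 hep.le
  -- but z was chosen so that exp(-K z) ≤ Φ 0
  have hzc : (-Real.log (Φ 0)) / K + 1 ≤ z := le_trans (le_max_right _ _) (le_max_right _ _)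
  have h5 : Real.exp (-K * z) ≤ Φ 0 := by
    have : -K * z ≤ Real.log (Φ 0) := by
      have := mul_le_mul_of_nonneg_left hzc hK.le
      rw [mul_add, mul_one, mul_div_cancel₀ _ (ne_of_gt hK)] at this
      nlinarith
    calc Real.exp (-K * z) ≤ Real.exp (Real.log (Φ 0)) := Real.exp_le_exp.mpr this
      _ = Φ 0 := Real.exp_log (h01 0).1
  linarith
end
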